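/- Let ρ(x) = -log f(x) where f is the ESBIII density with μ = 0, σ = 1. Then lim_{|x|→∞} ρ(x) = ∞ and lim_{|x|→∞} ρ(x)/|x| = 0. -/

import Mathlib

open Real Filter

/-- sign function with sign(0) = 1, as in the paper. -/
noncomputable def sgn (x : ℝ) : ℝ := if x < 0 then -1 else 1

/-- ESBIII density. -/
noncomputable def esbiiiPdf (c k ε : ℝ) (x : ℝ) : ℝ :=
  (c * k / 2) * ((sgn x * x) / (1 + sgn x * ε)) ^ (-(c + 1)) *
    (1 + ((sgn x * x) / (1 + sgn x * ε)) ^ (-c)) ^ (-(k + 1))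

open Topology

/-!
On each half-line `ρ(x) = stdRho c k (|x| / (1 ± ε))`, and for `u > 0`
`stdRho c k u = -log (c k / 2) + (c + 1) log u + (k + 1) log (1 + u ^ (-c))`.
The last term tends to `0`, so `ρ` grows like `(c + 1) log |x|`: to infinity, but sublinearly.
-/

noncomputable def stdRho (c k u : ℝ) : ℝ :=
  -log (c * k / 2 * u ^ (-(c + 1)) * (1 + u ^ (-c)) ^ (-(k + 1)))

section StdRho

variable {c k : ℝ}

lemma stdRho_eq (hc : 0 < c) (hk : k ≠ 0) {u : ℝ} (hu : 0 < u) :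
    stdRho c k u = -log (c * k / 2) + (c + 1) * log u + (k + 1) * log (1 + u ^ (-c)) := by
  have hck : c * k / 2 ≠ 0 := by positivity
  have hpow : 0 < u ^ (-(c + 1)) := rpow_pos_of_pos hu _
  have hbase : 0 < 1 + u ^ (-c) := by positivity
  rw [stdRho, log_mul (mul_ne_zero hck hpow.ne') (rpow_pos_of_pos hbase _).ne',
    log_mul hck hpow.ne', log_rpow hu, log_rpow hbase]
  ring

lemma tendsto_log_one_add_rpow_neg (hc : 0 < c) :
    Tendsto (fun u : ℝ => log (1 + u ^ (-c))) atTop (𝓝 0) := by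
  have h : Tendsto (fun u : ℝ => 1 + u ^ (-c)) atTop (𝓝 1) := by
    simpa using tendsto_const_nhds.add (tendsto_rpow_neg_atTop hc)
  simpa using h.log one_ne_zero

lemma tendsto_stdRho_atTop (hc : 0 < c) (hk : k ≠ 0) : Tendsto (stdRho c k) atTop atTop := by
  refine Tendsto.congr' ((eventually_gt_atTop 0).mono fun u hu => (stdRho_eq hc hk hu).symm) ?_
  have hlog : Tendsto (fun u : ℝ => (c + 1) * log u) atTop atTop :=
    tendsto_log_atTop.const_mul_atTop (by positivity)
  have hrest : Tendsto (fun u : ℝ => (k + 1) * log (1 + u ^ (-c))) atTop (𝓝 ((k + 1) * 0)) :=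
    tendsto_const_nhds.mul (tendsto_log_one_add_rpow_neg hc)
  exact (tendsto_const_nhds.add_atTop hlog).atTop_add hrest

lemma tendsto_stdRho_div_self (hc : 0 < c) (hk : k ≠ 0) :
    Tendsto (fun u => stdRho c k u / u) atTop (𝓝 0) := by
  have heq : (fun u => -log (c * k / 2) / u + (c + 1) * (log u / u)
      + (k + 1) * log (1 + u ^ (-c)) / u) =ᶠ[atTop] fun u => stdRho c k u / u :=
    (eventually_gt_atTop 0).mono fun u hu => by simp only [stdRho_eq hc hk hu]; ring
  refine Tendsto.congr' heq ?_
  have hconst : Tendsto (fun u : ℝ => -log (c * k / 2) / u) atTop (𝓝 0) :=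
    tendsto_const_nhds.div_atTop tendsto_id
  have hlog : Tendsto (fun u : ℝ => (c + 1) * (log u / u)) atTop (𝓝 ((c + 1) * 0)) :=
    tendsto_const_nhds.mul isLittleO_log_id_atTop.tendsto_div_nhds_zero
  have hrest : Tendsto (fun u : ℝ => (k + 1) * log (1 + u ^ (-c)) / u) atTop (𝓝 0) :=
    (tendsto_const_nhds.mul (tendsto_log_one_add_rpow_neg hc)).div_atTop tendsto_id
  simpa using (hconst.add hlog).add hrest

lemma tendsto_stdRho_div_const_div (hc : 0 < c) (hk : k ≠ 0) {a : ℝ} (ha : 0 < a) :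
    Tendsto (fun y => stdRho c k (y / a) / y) atTop (𝓝 0) := by
  have heq : (fun y => stdRho c k (y / a) / (y / a) / a) =ᶠ[atTop]
      fun y => stdRho c k (y / a) / y :=
    (eventually_gt_atTop 0).mono fun y hy => by field_simp
  simpa using (((tendsto_stdRho_div_self hc hk).comp
    (tendsto_id.atTop_div_const ha)).div_const a).congr' heq

end StdRho

section Esbiii

variable {c k ε x : ℝ}

lemma neg_log_esbiiiPdf_of_nonneg (hx : 0 ≤ x) :
    -log (esbiiiPdf c k ε x) = stdRho c k (x / (1 + ε)) := by
  simp [esbiiiPdf, stdRho, sgn, not_lt.mpr hx]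

lemma neg_log_esbiiiPdf_of_neg (hx : x < 0) :
    -log (esbiiiPdf c k ε x) = stdRho c k (-x / (1 - ε)) := by
  simp [esbiiiPdf, stdRho, sgn, hx, sub_eq_add_neg, neg_div]

end Esbiii

/-- ρ(x) = -log f(x) tends to ∞ as |x| → ∞, and ρ(x)/|x| tends to 0 as |x| → ∞. -/
theorem esbiii_rho_limits (c k ε : ℝ) (hc : 0 < c) (hk : 0 < k)
    (hε : ε ∈ Set.Ioo (-1 : ℝ) 1) :
    (Tendsto (fun x : ℝ => -Real.log (esbiiiPdf c k ε x)) atTop atTop ∧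
      Tendsto (fun x : ℝ => -Real.log (esbiiiPdf c k ε x)) atBot atTop) ∧
    (Tendsto (fun x : ℝ => -Real.log (esbiiiPdf c k ε x) / |x|) atTop (nhds 0) ∧
      Tendsto (fun x : ℝ => -Real.log (esbiiiPdf c k ε x) / |x|) atBot (nhds 0)) := by
  have hright : 0 < 1 + ε := by linarith [hε.1]
  have hleft : 0 < 1 - ε := by linarith [hε.2]
  have eq_atTop : ∀ᶠ x in atTop, stdRho c k (x / (1 + ε)) = -log (esbiiiPdf c k ε x) :=
    (eventually_ge_atTop 0).mono fun x hx => (neg_log_esbiiiPdf_of_nonneg hx).symm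
  have eq_atBot : ∀ᶠ x in atBot, stdRho c k (-x / (1 - ε)) = -log (esbiiiPdf c k ε x) :=
    (eventually_lt_atBot 0).mono fun x hx => (neg_log_esbiiiPdf_of_neg hx).symm
  refine ⟨⟨?_, ?_⟩, ?_, ?_⟩
  · exact ((tendsto_stdRho_atTop hc hk.ne').comp
      (tendsto_id.atTop_div_const hright)).congr' eq_atTop
  · exact ((tendsto_stdRho_atTop hc hk.ne').comp
      (tendsto_neg_atBot_atTop.atTop_div_const hleft)).congr' eq_atBot
  · refine (tendsto_stdRho_div_const_div hc hk.ne' hright).congr' ?_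
    filter_upwards [eq_atTop, eventually_ge_atTop 0] with x hx hx0
    rw [hx, abs_of_nonneg hx0]
  · refine ((tendsto_stdRho_div_const_div hc hk.ne' hleft).comp tendsto_neg_atBot_atTop).congr' ?_
    filter_upwards [eq_atBot, eventually_lt_atBot 0] with x hx hx0
    rw [Function.comp_apply, hx, abs_of_neg hx0]
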